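/- (Rototranslational injectivity; core of Proposition 2.) Let n ≥ 1, let x_1,…,x_n ∈ ℝ³ with centroid x̄ = (1/n) Σ_i x_i, and suppose there exist indices i, j such that x_i − x̄ and x_j − x̄ are linearly independent. Let R₁, R₂ be 3×3 real special orthogonal matrices and t₁, t₂ ∈ ℝ³. If R₁(x_i − x̄) + x̄ + t₁ = R₂(x_i − x̄) + x̄ + t₂ for every i = 1,…,n, then R₁ = R₂ and t₁ = t₂. -/

import Mathlib

open scoped BigOperators Matrix

def cross3 (u v : Fin 3 → ℝ) : Fin 3 → ℝ :=
  ![u 1 * v 2 - u 2 * v 1, u 2 * v 0 - u 0 * v 2, u 0 * v 1 - u 1 * v 0]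

/-!
Summing the hypothesis over all atoms kills the rotated terms, because the centred positions
sum to zero; this recovers the translation. The two rotations then agree on `u = x i - x̄` and
`v = x j - x̄`, hence on `u ⨯₃ v` since special orthogonal matrices preserve the cross product,
and `u, v, u ⨯₃ v` is a basis of `ℝ³` as soon as `u, v` are linearly independent.
-/

open Matrix

theorem sum_sub_centroid_eq_zero {ι K E : Type*} [Fintype ι] [Nonempty ι] [Field K] [CharZero K]
    [AddCommGroup E] [Module K E] (x : ι → E) :
    ∑ i, (x i - (1 / (Fintype.card ι : K)) • ∑ j, x j) = 0 := by
  have hcard : (Fintype.card ι : K) ≠ 0 := Nat.cast_ne_zero.mpr Fintype.card_ne_zero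
  rw [Finset.sum_sub_distrib, Finset.sum_const, Finset.card_univ, ← Nat.cast_smul_eq_nsmul K,
    smul_smul, mul_one_div_cancel hcard, one_smul, sub_self]

theorem eq_of_forall_add_eq_add_of_sum_eq_zero {ι K E F : Type*} [Fintype ι] [Nonempty ι]
    [Field K] [CharZero K] [AddCommGroup E] [Module K E] [AddCommGroup F] [Module K F]
    (f g : E →ₗ[K] F) {y : ι → E} (hy : ∑ i, y i = 0) {s t : F}
    (h : ∀ i, f (y i) + s = g (y i) + t) : s = t := by
  have hsum := Finset.sum_congr rfl fun i (_ : i ∈ Finset.univ) => h i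
  rw [Finset.sum_add_distrib, Finset.sum_add_distrib, ← map_sum, ← map_sum, hy, map_zero,
    map_zero, zero_add, zero_add, Finset.sum_const, Finset.sum_const,
    ← Nat.cast_smul_eq_nsmul K, ← Nat.cast_smul_eq_nsmul K] at hsum
  exact smul_right_injective F (Nat.cast_ne_zero.mpr Finset.univ_nonempty.card_pos.ne') hsum

theorem cross_mulVec_mulVec {R : Type*} [CommRing R] (M : Matrix (Fin 3) (Fin 3) R)
    (u v : Fin 3 → R) : (M *ᵥ u) ⨯₃ (M *ᵥ v) = (adjugate M)ᵀ *ᵥ (u ⨯₃ v) := by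
  ext k
  fin_cases k <;>
    simp [cross_apply, mulVec, dotProduct, Fin.sum_univ_three, adjugate_fin_three] <;> ring

theorem adjugate_eq_transpose_of_orthogonal_of_det_eq_one {n R : Type*} [Fintype n]
    [DecidableEq n] [CommRing R] {M : Matrix n n R} (hM : Mᵀ * M = 1) (hdet : M.det = 1) :
    adjugate M = Mᵀ := by
  calc adjugate M = adjugate M * (M * Mᵀ) := by rw [mul_eq_one_comm.mp hM, mul_one]
    _ = Mᵀ := by rw [← mul_assoc, adjugate_mul, hdet, one_smul, one_mul]

theorem cross_mulVec_mulVec_of_orthogonal_of_det_eq_one {R : Type*} [CommRing R]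
    {M : Matrix (Fin 3) (Fin 3) R} (hM : Mᵀ * M = 1) (hdet : M.det = 1) (u v : Fin 3 → R) :
    (M *ᵥ u) ⨯₃ (M *ᵥ v) = M *ᵥ (u ⨯₃ v) := by
  rw [cross_mulVec_mulVec, adjugate_eq_transpose_of_orthogonal_of_det_eq_one hM hdet,
    transpose_transpose]

theorem linearIndependent_cross {K : Type*} [Field K] [LinearOrder K] [IsStrictOrderedRing K]
    {u v : Fin 3 → K} (huv : LinearIndependent K ![u, v]) :
    LinearIndependent K ![u, v, u ⨯₃ v] := by
  have hcross : u ⨯₃ v ≠ 0 := crossProduct_ne_zero_iff_linearIndependent.mpr huv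
  have hdet : det ![u, v, u ⨯₃ v] = u ⨯₃ v ⬝ᵥ u ⨯₃ v := by
    rw [← triple_product_eq_det, triple_product_permutation, triple_product_permutation]
  exact linearIndependent_rows_of_det_ne_zero (hdet ▸ mt dotProduct_self_eq_zero.mp hcross)

theorem Matrix.ext_of_mulVec_eq_of_span_eq_top {m n ι R : Type*} [Fintype n] [DecidableEq n]
    [CommRing R] {M N : Matrix m n R} {b : ι → n → R}
    (hb : Submodule.span R (Set.range b) = ⊤) (h : ∀ i, M *ᵥ b i = N *ᵥ b i) : M = N :=
  toLin'.injective (LinearMap.ext_on_range hb h)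

theorem eq_of_orthogonal_of_det_eq_one_of_mulVec_eq {R₁ R₂ : Matrix (Fin 3) (Fin 3) ℝ}
    (hR₁ : R₁ᵀ * R₁ = 1) (hdet₁ : R₁.det = 1) (hR₂ : R₂ᵀ * R₂ = 1) (hdet₂ : R₂.det = 1)
    {u v : Fin 3 → ℝ} (huv : LinearIndependent ℝ ![u, v])
    (hu : R₁ *ᵥ u = R₂ *ᵥ u) (hv : R₁ *ᵥ v = R₂ *ᵥ v) : R₁ = R₂ := by
  have hspan : Submodule.span ℝ (Set.range ![u, v, u ⨯₃ v]) = ⊤ :=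
    (linearIndependent_cross huv).span_eq_top_of_card_eq_finrank (by simp)
  refine ext_of_mulVec_eq_of_span_eq_top hspan fun k => ?_
  fin_cases k
  · exact hu
  · exact hv
  · simp only [Fin.reduceFinMk, cons_val]
    rw [← cross_mulVec_mulVec_of_orthogonal_of_det_eq_one hR₁ hdet₁,
      ← cross_mulVec_mulVec_of_orthogonal_of_det_eq_one hR₂ hdet₂, hu, hv]

theorem stmt_10_general (n : ℕ) (x : Fin n → Fin 3 → ℝ)
    (xbar : Fin 3 → ℝ) (hxbar : xbar = ((1 : ℝ) / n) • ∑ i, x i)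
    (hindep : ∃ i j : Fin n, LinearIndependent ℝ ![x i - xbar, x j - xbar])
    (R₁ R₂ : Matrix (Fin 3) (Fin 3) ℝ)
    (hR₁ : R₁ᵀ * R₁ = 1) (hdet₁ : R₁.det = 1)
    (hR₂ : R₂ᵀ * R₂ = 1) (hdet₂ : R₂.det = 1)
    (t₁ t₂ : Fin 3 → ℝ)
    (h : ∀ i, R₁.mulVec (x i - xbar) + xbar + t₁ = R₂.mulVec (x i - xbar) + xbar + t₂) :
    R₁ = R₂ ∧ t₁ = t₂ := by
  obtain ⟨i, j, hij⟩ := hindep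
  have : Nonempty (Fin n) := ⟨i⟩
  have hcentred : ∑ k, (x k - xbar) = 0 := by
    simpa [hxbar] using sum_sub_centroid_eq_zero (K := ℝ) x
  have h' (k : Fin n) : R₁ *ᵥ (x k - xbar) + t₁ = R₂ *ᵥ (x k - xbar) + t₂ := by
    simpa only [add_right_comm _ xbar, add_left_inj] using h k
  obtain rfl : t₁ = t₂ :=
    eq_of_forall_add_eq_add_of_sum_eq_zero R₁.mulVecLin R₂.mulVecLin hcentred h'
  exact ⟨eq_of_orthogonal_of_det_eq_one_of_mulVec_eq hR₁ hdet₁ hR₂ hdet₂ hij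
    (add_right_cancel (h' i)) (add_right_cancel (h' j)), rfl⟩

theorem stmt_10 (n : ℕ) (hn : 1 ≤ n) (x : Fin n → Fin 3 → ℝ)
    (xbar : Fin 3 → ℝ) (hxbar : xbar = ((1 : ℝ) / n) • ∑ i, x i)
    (hindep : ∃ i j : Fin n, LinearIndependent ℝ ![x i - xbar, x j - xbar])
    (R₁ R₂ : Matrix (Fin 3) (Fin 3) ℝ)
    (hR₁ : R₁ᵀ * R₁ = 1) (hdet₁ : R₁.det = 1)
    (hR₂ : R₂ᵀ * R₂ = 1) (hdet₂ : R₂.det = 1)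
    (t₁ t₂ : Fin 3 → ℝ)
    (h : ∀ i, R₁.mulVec (x i - xbar) + xbar + t₁ = R₂.mulVec (x i - xbar) + xbar + t₂) :
    R₁ = R₂ ∧ t₁ = t₂ :=
  stmt_10_general n x xbar hxbar hindep R₁ R₂ hR₁ hdet₁ hR₂ hdet₂ t₁ t₂ h
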